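/- Let X be a compact metrizable space such that S³ is an absolute extensor of X (dim X ≤ 3). If ℝP^∞ is an absolute extensor of X, then ℝP³ is an absolute extensor of X. -/

import Mathlib

noncomputable section
open Metric Set

open Metric Set

abbrev USphere (n : ℕ) : Type :=
  (sphere (0 : EuclideanSpace ℝ (Fin (n+1))) 1 : Set (EuclideanSpace ℝ (Fin (n+1))))

def antipodalSetoid (n : ℕ) : Setoid (USphere n) where
  r x y := (x : EuclideanSpace ℝ (Fin (n+1))) = (y : EuclideanSpace ℝ (Fin (n+1)))
    ∨ (x : EuclideanSpace ℝ (Fin (n+1))) = -(y : EuclideanSpace ℝ (Fin (n+1)))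
  iseqv := by
    constructor
    · intro x; exact Or.inl rfl
    · rintro x y (h | h)
      · exact Or.inl h.symm
      · right; rw [h]; simp
    · rintro x y z (h1 | h1) (h2 | h2)
      · exact Or.inl (h1.trans h2)
      · right; rw [h1, h2]
      · right; rw [h1, h2]
      · left; rw [h1, h2]; simp

def RP (n : ℕ) : Type := Quotient (antipodalSetoid n)

instance (n : ℕ) : TopologicalSpace (RP n) := by unfold RP; infer_instance

/-- `K` is an absolute extensor of `X`: every continuous map into `K` defined on a closed
subset of `X` extends to a continuous map on all of `X`. -/
def IsAbsoluteExtensor (X : Type*) [TopologicalSpace X] (K : Type*) [TopologicalSpace K] : Prop :=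
  ∀ A : Set X, IsClosed A → ∀ f : C(A, K), ∃ g : C(X, K), ∀ a : A, g a = f a

/-- The covering projection from the sphere to projective space. -/
def pcov (n : ℕ) : USphere n → RP n := fun z => Quotient.mk (antipodalSetoid n) z

def coordIncl (n : ℕ) (x : EuclideanSpace ℝ (Fin (n+1))) : EuclideanSpace ℝ (Fin (n+2)) :=
  WithLp.toLp 2 (fun i : Fin (n+2) => if h : (i : ℕ) < n + 1 then x ⟨i, h⟩ else 0)

lemma coordIncl_mem (n : ℕ) (x : USphere n) :
    coordIncl n (x : EuclideanSpace ℝ (Fin (n+1))) ∈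
      sphere (0 : EuclideanSpace ℝ (Fin (n+2))) 1 := by
  obtain ⟨x, hx⟩ := x
  rw [mem_sphere_iff_norm, sub_zero, EuclideanSpace.norm_eq] at hx ⊢
  have h2 : ∑ i : Fin (n+2), ‖coordIncl n x i‖ ^ 2 = ∑ i : Fin (n+1), ‖x i‖ ^ 2 := by
    rw [Fin.sum_univ_castSucc]
    simp [coordIncl, Fin.is_le]
  rw [h2]; exact hx

lemma coordIncl_neg (n : ℕ) (x : EuclideanSpace ℝ (Fin (n+1))) :
    coordIncl n (-x) = -(coordIncl n x) := by
  ext i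
  by_cases h : (i : ℕ) ≤ n <;> simp [coordIncl, h]

/-- The equatorial inclusion of spheres. -/
def sphereIncl (n : ℕ) : USphere n → USphere (n+1) :=
  fun x => ⟨coordIncl n (x : EuclideanSpace ℝ (Fin (n+1))), coordIncl_mem n x⟩

/-- The standard (equatorial) inclusion `ℝPⁿ → ℝP^(n+1)`. -/
def rpIncl (n : ℕ) : RP n → RP (n+1) :=
  Quotient.map' (sphereIncl n) (by
    rintro x y (h | h)
    · left; show coordIncl n _ = coordIncl n _; rw [h]
    · right
      show coordIncl n (x : EuclideanSpace ℝ (Fin (n+1))) = -(coordIncl n _)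
      rw [h, coordIncl_neg])
open Metric Set

/-- The real Hilbert space ℓ². -/
abbrev Hilbertl2 : Type := lp (fun _ : ℕ => ℝ) 2

def antipodalSetoidInf : Setoid (sphere (0 : Hilbertl2) 1 : Set Hilbertl2) where
  r x y := (x : Hilbertl2) = (y : Hilbertl2) ∨ (x : Hilbertl2) = -(y : Hilbertl2)
  iseqv := by
    constructor
    · intro x; exact Or.inl rfl
    · rintro x y (h | h)
      · exact Or.inl h.symm
      · right; rw [h]; simp
    · rintro x y z (h1 | h1) (h2 | h2)
      · exact Or.inl (h1.trans h2)
      · right; rw [h1, h2]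
      · right; rw [h1, h2]
      · left; rw [h1, h2]; simp

/-- Infinite real projective space: the quotient of the unit sphere of ℓ² by the
antipodal identification. -/
def RPInf : Type := Quotient antipodalSetoidInf

instance : TopologicalSpace RPInf := by unfold RPInf; infer_instance
abbrev UBall3 : Type := (closedBall (0 : EuclideanSpace ℝ (Fin 3)) 1 : Set (EuclideanSpace ℝ (Fin 3)))

def hemiLift (x : EuclideanSpace ℝ (Fin 3)) : EuclideanSpace ℝ (Fin 4) :=
  WithLp.toLp 2 (fun i : Fin 4 => if h : (i : ℕ) < 3 then x ⟨i, h⟩ else Real.sqrt (1 - ‖x‖ ^ 2))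

lemma hemiLift_mem (x : UBall3) :
    hemiLift (x : EuclideanSpace ℝ (Fin 3)) ∈ sphere (0 : EuclideanSpace ℝ (Fin 4)) 1 := by
  obtain ⟨x, hx⟩ := x
  rw [mem_closedBall, dist_zero_right] at hx
  have hx2 : ‖x‖ ^ 2 ≤ 1 := by nlinarith [norm_nonneg x]
  have hsum : ∑ i : Fin 3, ‖x i‖ ^ 2 = ‖x‖ ^ 2 := by
    rw [EuclideanSpace.norm_eq, Real.sq_sqrt]
    positivity
  rw [mem_sphere_iff_norm, sub_zero, EuclideanSpace.norm_eq]
  have h2 : ∑ i : Fin 4, ‖hemiLift x i‖ ^ 2 = 1 := by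
    rw [Fin.sum_univ_castSucc]
    have hlast : ‖hemiLift x (Fin.last 3)‖ ^ 2 = 1 - ‖x‖ ^ 2 := by
      simp only [hemiLift, Fin.last, PiLp.toLp_apply]
      rw [dif_neg (by norm_num)]
      rw [Real.norm_eq_abs, sq_abs, Real.sq_sqrt (by linarith)]
    have hcast : ∀ i : Fin 3, ‖hemiLift x (Fin.castSucc i)‖ ^ 2 = ‖x i‖ ^ 2 := by
      intro i
      simp only [hemiLift, PiLp.toLp_apply]
      rw [dif_pos (by exact i.is_lt)]
      congr 1
    rw [hlast]
    rw [Finset.sum_congr rfl (fun i _ => hcast i), hsum]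
    ring
  rw [h2, Real.sqrt_one]

/-- The quotient map `q₃ : B³ → ℝP³` (identify `B³` with the upper hemisphere of `S³`). -/
def q3 : UBall3 → RP 3 := fun x => pcov 3 ⟨hemiLift (x : EuclideanSpace ℝ (Fin 3)), hemiLift_mem x⟩

/-! ### The first modification of ℝP³ -/

/-- The disk of radius 1/3 (the meridian disk `D`). -/
abbrev DiskThird : Type :=
  (closedBall (0 : EuclideanSpace ℝ (Fin 2)) (1/3) : Set (EuclideanSpace ℝ (Fin 2)))

/-- The parametrization of the solid torus `L ⊂ B³`, obtained by rotating the disk `D`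
(of radius 1/3, centered at `(0,1/2,0)` in the yz-plane) about the z-axis. -/
def LparamE (s : USphere 1) (d : EuclideanSpace ℝ (Fin 2)) : EuclideanSpace ℝ (Fin 3) :=
  WithLp.toLp 2 (fun i : Fin 3 =>
    if i = 0 then -((s : EuclideanSpace ℝ (Fin 2)) 1) * (1/2 + d 0)
    else if i = 1 then ((s : EuclideanSpace ℝ (Fin 2)) 0) * (1/2 + d 0)
    else d 1)

lemma circle_sq_sum (s : USphere 1) :
    ((s : EuclideanSpace ℝ (Fin 2)) 0) ^ 2 + ((s : EuclideanSpace ℝ (Fin 2)) 1) ^ 2 = 1 := by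
  obtain ⟨s, hs⟩ := s
  rw [mem_sphere_iff_norm, sub_zero, EuclideanSpace.norm_eq] at hs
  have h0 : (0:ℝ) ≤ ∑ i : Fin 2, ‖s i‖ ^ 2 := by positivity
  have := Real.sq_sqrt h0
  rw [hs] at this
  rw [Fin.sum_univ_two] at this
  simpa [Real.norm_eq_abs, sq_abs] using this.symm

lemma disk_sq_sum (d : EuclideanSpace ℝ (Fin 2)) (hd : d ∈ closedBall (0 : EuclideanSpace ℝ (Fin 2)) (1/3)) :
    (d 0) ^ 2 + (d 1) ^ 2 ≤ 1/9 := by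
  rw [mem_closedBall, dist_zero_right, EuclideanSpace.norm_eq] at hd
  have h0 : (0:ℝ) ≤ ∑ i : Fin 2, ‖d i‖ ^ 2 := by positivity
  have h1 := Real.sq_sqrt h0
  have h2 : (∑ i : Fin 2, ‖d i‖ ^ 2) ≤ 1/9 := by
    nlinarith [Real.sqrt_nonneg (∑ i : Fin 2, ‖d i‖ ^ 2)]
  rw [Fin.sum_univ_two] at h2
  simpa [Real.norm_eq_abs, sq_abs] using h2

lemma LparamE_normsq (s : USphere 1) (d : EuclideanSpace ℝ (Fin 2))
    (hd : d ∈ closedBall (0 : EuclideanSpace ℝ (Fin 2)) (1/3)) :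
    ‖LparamE s d‖ ^ 2 ≤ 7/10 := by
  have hs := circle_sq_sum s
  have hdd := disk_sq_sum d hd
  have hd0 : (d 0) ^ 2 ≤ 1/9 := by nlinarith [sq_nonneg (d 1)]
  have hd0' : d 0 ≤ 1/3 := by nlinarith
  rw [EuclideanSpace.norm_eq, Real.sq_sqrt (by positivity)]
  rw [Fin.sum_univ_three]
  simp only [LparamE, PiLp.toLp_apply]
  norm_num [Fin.ext_iff]
  simp only [Real.norm_eq_abs, mul_pow, sq_abs]
  have key : ((s : EuclideanSpace ℝ (Fin 2)) 1) ^ 2 * (1/2 + d 0) ^ 2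
      + ((s : EuclideanSpace ℝ (Fin 2)) 0) ^ 2 * (1/2 + d 0) ^ 2 = (1/2 + d 0) ^ 2 := by
    linear_combination (1/2 + d 0) ^ 2 * hs
  nlinarith [sq_nonneg (d 1), sq_nonneg (1/2 + d 0)]

lemma LparamE_mem (s : USphere 1) (d : EuclideanSpace ℝ (Fin 2))
    (hd : d ∈ closedBall (0 : EuclideanSpace ℝ (Fin 2)) (1/3)) :
    LparamE s d ∈ closedBall (0 : EuclideanSpace ℝ (Fin 3)) 1 := by
  rw [mem_closedBall, dist_zero_right]
  have h := LparamE_normsq s d hd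
  nlinarith [norm_nonneg (LparamE s d)]

/-- The solid torus `L`, viewed as a subset of `ℝP³` (it misses the boundary sphere). -/
def LsetRP : Set (RP 3) :=
  {p | ∃ (s : USphere 1) (d : EuclideanSpace ℝ (Fin 2))
    (hd : d ∈ closedBall (0 : EuclideanSpace ℝ (Fin 2)) (1/3)),
      q3 ⟨LparamE s d, LparamE_mem s d hd⟩ = p}

/-- The point of the boundary circle `∂D` corresponding to `z ∈ S¹` under the standard
identification `ℝP¹ ≅ ∂D` (via the squaring map on the circle). -/
def bdPtE (z : USphere 1) : EuclideanSpace ℝ (Fin 2) :=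
  WithLp.toLp 2 (fun i : Fin 2 =>
    if i = 0 then (((z : EuclideanSpace ℝ (Fin 2)) 0) ^ 2 - ((z : EuclideanSpace ℝ (Fin 2)) 1) ^ 2) / 3
    else (2 * ((z : EuclideanSpace ℝ (Fin 2)) 0) * ((z : EuclideanSpace ℝ (Fin 2)) 1)) / 3)

lemma bdPtE_mem (z : USphere 1) : bdPtE z ∈ closedBall (0 : EuclideanSpace ℝ (Fin 2)) (1/3) := by
  have hz := circle_sq_sum z
  rw [mem_closedBall, dist_zero_right, EuclideanSpace.norm_eq]
  have h1 : ∑ i : Fin 2, ‖bdPtE z i‖ ^ 2 = (1/3 : ℝ) ^ 2 := by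
    rw [Fin.sum_univ_two]
    simp only [bdPtE, PiLp.toLp_apply]
    norm_num [Fin.ext_iff]
    simp only [div_pow, mul_pow, sq_abs]
    linear_combination ((((z : EuclideanSpace ℝ (Fin 2)) 0) ^ 2 + ((z : EuclideanSpace ℝ (Fin 2)) 1) ^ 2 + 1) / 9) * hz
  rw [h1, Real.sqrt_sq (by norm_num)]

lemma bdPtE_neg (z w : USphere 1)
    (h : (z : EuclideanSpace ℝ (Fin 2)) = -(w : EuclideanSpace ℝ (Fin 2))) :
    bdPtE z = bdPtE w := by
  ext i
  have h0 : (z : EuclideanSpace ℝ (Fin 2)) 0 = -((w : EuclideanSpace ℝ (Fin 2)) 0) := by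
    rw [h]; rfl
  have h1 : (z : EuclideanSpace ℝ (Fin 2)) 1 = -((w : EuclideanSpace ℝ (Fin 2)) 1) := by
    rw [h]; rfl
  simp only [bdPtE, PiLp.toLp_apply, h0, h1]
  ring_nf

/-- The attaching map `S¹ × ℝP¹ → ℝP³` onto the boundary `∂L` of the solid torus,
using the identification of `ℝP¹` with `∂D`. -/
def attachM1 (s : USphere 1) : RP 1 → RP 3 :=
  Quotient.lift (fun z : USphere 1 => q3 ⟨LparamE s (bdPtE z), LparamE_mem s (bdPtE z) (bdPtE_mem z)⟩)
    (by
      rintro z w (h | h)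
      · have : z = w := Subtype.ext h
        rw [this]
      · have : bdPtE z = bdPtE w := bdPtE_neg z w h
        simp only [this])

/-- The underlying type of the first modification `M₁` of `ℝP³`: the disjoint union of
`ℝP³` minus the interior of the solid torus `L` and of `S¹ × ℝP²`. -/
abbrev M1Carrier : Type := {p : RP 3 // p ∉ interior LsetRP} ⊕ (USphere 1 × RP 2)

/-- The gluing relation for the first modification: a boundary point `attachM1 s c ∈ ∂L`
is identified with the point `(s, c) ∈ S¹ × ℝP¹ ⊂ S¹ × ℝP²`. -/
def M1Rel : M1Carrier → M1Carrier → Prop := fun p q =>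
  ∃ (s : USphere 1) (c : RP 1) (h : attachM1 s c ∉ interior LsetRP),
    p = Sum.inl ⟨attachM1 s c, h⟩ ∧ q = Sum.inr (s, rpIncl 1 c)

/-- The first modification `M₁` of `ℝP³`: remove the interior of the solid torus `L` and
attach `S¹ × ℝP²` via the map `S¹ × ℝP¹ → ∂L`. -/
def M1 : Type := Quot M1Rel

instance : TopologicalSpace M1 := by unfold M1; infer_instance

lemma rpIncl_not_mem_LsetRP (c : RP 2) : rpIncl 2 c ∉ LsetRP := by
  rintro ⟨s, d, hd, heq⟩
  obtain ⟨y, rfl⟩ := Quotient.exists_rep c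
  have hmk : rpIncl 2 (Quotient.mk (antipodalSetoid 2) y)
      = Quotient.mk (antipodalSetoid 3) (sphereIncl 2 y) := rfl
  rw [hmk] at heq
  have heq' := Quotient.exact heq
  have hpos : 0 < Real.sqrt (1 - ‖LparamE s d‖ ^ 2) := by
    apply Real.sqrt_pos.mpr
    have := LparamE_normsq s d hd
    linarith
  have hlift3 : hemiLift (LparamE s d) 3 = Real.sqrt (1 - ‖LparamE s d‖ ^ 2) := by
    simp only [hemiLift, PiLp.toLp_apply]
    rw [dif_neg (by decide)]
  have hincl3 : (sphereIncl 2 y : EuclideanSpace ℝ (Fin 4)) 3 = 0 := by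
    show coordIncl 2 (y : EuclideanSpace ℝ (Fin 3)) 3 = 0
    simp only [coordIncl, PiLp.toLp_apply]
    rw [dif_neg (by decide)]
  rcases heq' with h | h
  · have h3' : hemiLift (LparamE s d) 3 = (sphereIncl 2 y : EuclideanSpace ℝ (Fin 4)) 3 :=
      congrArg (fun v : EuclideanSpace ℝ (Fin 4) => v 3) h
    rw [hlift3, hincl3] at h3'
    linarith
  · have h3' : hemiLift (LparamE s d) 3 = -((sphereIncl 2 y : EuclideanSpace ℝ (Fin 4)) 3) :=
      congrArg (fun v : EuclideanSpace ℝ (Fin 4) => v 3) h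
    rw [hlift3, hincl3, neg_zero] at h3'
    linarith

lemma rpIncl_not_mem_interior_LsetRP (c : RP 2) : rpIncl 2 c ∉ interior LsetRP :=
  fun h => rpIncl_not_mem_LsetRP c (interior_subset h)

/-- The copy of the projective plane `ℝP² = q₃(∂B³)` inside the first modification `M₁`. -/
def rp2ToM1 : RP 2 → M1 :=
  fun c => Quot.mk M1Rel (Sum.inl ⟨rpIncl 2 c, rpIncl_not_mem_interior_LsetRP c⟩)

/-! ### The second modification of ℝP³ -/

/-- The solid torus `R = q₃(L) ⊂ ℝP³`, where `L ⊂ B³` is the cylinder `x² + y² ≤ 1/4`. -/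
def RsetRP : Set (RP 3) :=
  {p | ∃ x : UBall3, ((x : EuclideanSpace ℝ (Fin 3)) 0) ^ 2 + ((x : EuclideanSpace ℝ (Fin 3)) 1) ^ 2 ≤ 1/4
        ∧ q3 x = p}

/-- The copy of `ℝP² = q₃(∂B³)` inside `ℝP³`. -/
def RP2in3 : Set (RP 3) := Set.range (rpIncl 2)

/-- The disk `D = R ∩ ℝP²`. -/
def DsetM2 : Set (RP 3) := RsetRP ∩ RP2in3

/-- The boundary circle `∂D = D ∩ ∂R` of the disk `D`. -/
def bdDM2 : Set (RP 3) := DsetM2 ∩ frontier RsetRP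

/-- The subspace `T = S¹ × ℝP² ∪ {a} × ℝP³` of `S¹ × ℝP³`. -/
def TSpace (a : USphere 1) : Type :=
  {p : USphere 1 × RP 3 // (∃ c : RP 2, p.2 = rpIncl 2 c) ∨ p.1 = a}

instance (a : USphere 1) : TopologicalSpace (TSpace a) := by unfold TSpace; infer_instance

/-- The projection `π : T → S¹` onto the first coordinate. -/
def TProj (a : USphere 1) : C(TSpace a, USphere 1) :=
  ⟨fun p => p.val.1, by exact (continuous_fst.comp continuous_subtype_val)⟩

/-- The underlying type of the second modification `M₂` of `ℝP³`. -/
abbrev M2Carrier (a : USphere 1) : Type := {p : RP 3 // p ∉ interior RsetRP} ⊕ (TSpace a)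

/-- The gluing relation for the second modification, relative to a solid-torus structure
`φ : S¹ × D ≃ₜ R` on `R` and an identification `ψ : ∂D ≃ₜ ℝP¹`: a point `φ(s,d) ∈ ∂R` is
identified with the point `(s, ψ d) ∈ S¹ × ℝP¹ ⊂ S¹ × ℝP² ⊂ T`. -/
def M2Rel (a : USphere 1) (φ : (USphere 1 × ↥DsetM2) ≃ₜ ↥RsetRP) (ψ : ↥bdDM2 ≃ₜ RP 1) :
    M2Carrier a → M2Carrier a → Prop := fun p q =>
  ∃ (s : USphere 1) (d : ↥bdDM2) (h : (φ (s, ⟨d.val, d.prop.1⟩)).val ∉ interior RsetRP),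
    p = Sum.inl ⟨(φ (s, ⟨d.val, d.prop.1⟩)).val, h⟩ ∧
    q = Sum.inr ⟨(s, rpIncl 2 (rpIncl 1 (ψ d))), Or.inl ⟨rpIncl 1 (ψ d), rfl⟩⟩

/-- The second modification `M₂` of `ℝP³`: remove the interior of the solid torus `R` and
attach `S¹ × ℝP² ∪ {a} × ℝP³` via the inclusion `∂R = S¹ × ∂D → S¹ × ℝP² ∪ {a} × ℝP³`. -/
def M2 (a : USphere 1) (φ : (USphere 1 × ↥DsetM2) ≃ₜ ↥RsetRP) (ψ : ↥bdDM2 ≃ₜ RP 1) : Type :=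
  Quot (M2Rel a φ ψ)

instance (a : USphere 1) (φ : (USphere 1 × ↥DsetM2) ≃ₜ ↥RsetRP) (ψ : ↥bdDM2 ≃ₜ RP 1) :
    TopologicalSpace (M2 a φ ψ) := by unfold M2; infer_instance

/-!
Compose `f : A → ℝPⁿ` with the inclusion `ℝPⁿ ⊂ ℝP^∞` and extend it to `W : X → ℝP^∞`, using
`ℝP^∞ ∈ AE(X)`. Over `ℝP^∞` sits the bundle `E = S^∞ ×_{±1} Sⁿ` with fibre `Sⁿ`: it is trivial
off each hyperplane, it has the section `[y] ↦ [(y, y)]` over `ℝPⁿ`, and `[(v, y)] ↦ [y]` maps it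
onto `ℝPⁿ`, undoing that section. Since `Sⁿ ∈ AE(X)`, the lift of `W` to `E` given on `A` by the
section extends over `X`, one closed trivializing piece of a finite cover at a time. Projecting
this lift to `ℝPⁿ` extends `f`.
-/

open Topology Bundle
open scoped RealInnerProductSpace

section Lifting

variable {X B Z F : Type*} [TopologicalSpace X] [TopologicalSpace B] [TopologicalSpace Z]
  [TopologicalSpace F] {proj : Z → B}

theorem exists_lift_union_of_trivialization (hF : IsAbsoluteExtensor X F)
    (e : Trivialization F proj) (W : C(X, B)) {D C : Set X} (hD : IsClosed D) (hC : IsClosed C)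
    (hCW : MapsTo W C e.baseSet) {G : X → Z} (hG : ContinuousOn G D)
    (hGW : ∀ x ∈ D, proj (G x) = W x) :
    ∃ G' : X → Z, ContinuousOn G' (D ∪ C) ∧ (∀ x ∈ D ∪ C, proj (G' x) = W x) ∧
      EqOn G' G D := by
  classical
  have hsource : MapsTo G (D ∩ C) e.source := fun x hx =>
    e.mem_source.2 (hGW x hx.1 ▸ hCW hx.2)
  have hfiber : ContinuousOn (fun x => (e (G x)).2) (D ∩ C) :=
    continuous_snd.comp_continuousOn
      (e.toOpenPartialHomeomorph.continuousOn.comp (hG.mono inter_subset_left) hsource)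
  obtain ⟨g, hg⟩ := hF (D ∩ C) (hD.inter hC) ⟨_, hfiber.domRestrict⟩
  set H : X → Z := fun x => e.toOpenPartialHomeomorph.symm (W x, g x)
  have hH : ContinuousOn H C :=
    e.toOpenPartialHomeomorph.continuousOn_symm.comp
      (W.continuous.prodMk g.continuous).continuousOn fun x hx => e.mem_target.2 (hCW hx)
  have hGH : EqOn G H (D ∩ C) := fun x hx => by
    simp only [H, hg ⟨x, hx⟩, ← hGW x hx.1]
    exact (e.symm_apply_mk_proj (hsource hx)).symm
  refine ⟨D.piecewise G H, ?_, fun x hx => ?_, D.piecewise_eqOn G H⟩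
  · refine ContinuousOn.union_of_isClosed (hG.congr (D.piecewise_eqOn G H))
      (hH.congr fun x hx => ?_) hD hC
    by_cases hxD : x ∈ D
    · rw [piecewise_eq_of_mem _ _ _ hxD, hGH ⟨hxD, hx⟩]
    · rw [piecewise_eq_of_notMem _ _ _ hxD]
  · by_cases hxD : x ∈ D
    · rw [piecewise_eq_of_mem _ _ _ hxD, hGW x hxD]
    · rw [piecewise_eq_of_notMem _ _ _ hxD]
      exact e.proj_symm_apply' (hCW (hx.resolve_left hxD))

theorem exists_lift_union_biUnion_of_trivializations {ι : Type*} (hF : IsAbsoluteExtensor X F)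
    (W : C(X, B)) {C : ι → Set X} (hC : ∀ i, IsClosed (C i))
    (hCW : ∀ i, ∃ e : Trivialization F proj, MapsTo W (C i) e.baseSet)
    {D : Set X} (hD : IsClosed D) {G : X → Z} (hG : ContinuousOn G D)
    (hGW : ∀ x ∈ D, proj (G x) = W x) (s : Finset ι) :
    ∃ G' : X → Z, ContinuousOn G' (D ∪ ⋃ i ∈ s, C i) ∧
      (∀ x ∈ D ∪ ⋃ i ∈ s, C i, proj (G' x) = W x) ∧ EqOn G' G D := by
  classical
  induction s using Finset.induction_on with
  | empty => exact ⟨G, by simpa using hG, by simpa using hGW, eqOn_refl G D⟩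
  | insert k s _ ih =>
    obtain ⟨G₁, hG₁, hG₁W, hG₁G⟩ := ih
    obtain ⟨e, he⟩ := hCW k
    have hclosed : IsClosed (D ∪ ⋃ i ∈ s, C i) :=
      hD.union (s.finite_toSet.isClosed_biUnion fun i _ => hC i)
    obtain ⟨G₂, hG₂, hG₂W, hG₂G₁⟩ :=
      exists_lift_union_of_trivialization hF e W hclosed (hC k) he hG₁ hG₁W
    have hunion : D ∪ ⋃ i ∈ insert k s, C i = (D ∪ ⋃ i ∈ s, C i) ∪ C k := by
      rw [Finset.set_biUnion_insert]; ac_rfl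
    rw [hunion]
    exact ⟨G₂, hG₂, hG₂W, fun x hx => (hG₂G₁ (Or.inl hx)).trans (hG₁G hx)⟩

theorem exists_lift_extend_of_trivializations [CompactSpace X] [NormalSpace X]
    (hF : IsAbsoluteExtensor X F) (htriv : ∀ b, ∃ e : Trivialization F proj, b ∈ e.baseSet)
    (W : C(X, B)) {A : Set X} (hA : IsClosed A) (G₀ : C(A, Z))
    (hG₀ : ∀ a, proj (G₀ a) = W a) :
    ∃ G : C(X, Z), (∀ x, proj (G x) = W x) ∧ ∀ a : A, G a = G₀ a := by
  classical
  choose e he using fun x => htriv (W x)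
  set U : X → Set X := fun x => W ⁻¹' (e x).baseSet
  have hU : ∀ x, IsOpen (U x) := fun x => (e x).open_baseSet.preimage W.continuous
  obtain ⟨t, ht⟩ :=
    isCompact_univ.elim_finite_subcover U hU fun x _ => mem_iUnion.2 ⟨x, he x⟩
  obtain ⟨V, hV, -, hVU⟩ := exists_iUnion_eq_closure_subset (u := fun i : t => U i)
    (fun i => hU i) (fun _ => toFinite _)
    (univ_subset_iff.1 fun x hx => by simpa using ht hx)
  -- `Z` may be empty, so the junk value of `G₁` off `A` is built from some map `X → F`.
  obtain ⟨g₀, -⟩ := hF ∅ isClosed_empty ⟨isEmptyElim, continuous_of_discreteTopology⟩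
  set G₁ : X → Z := fun x =>
    if h : x ∈ A then G₀ ⟨x, h⟩ else (e x).toOpenPartialHomeomorph.symm (W x, g₀ x)
  have hG₁ : ContinuousOn G₁ A := by
    rw [continuousOn_iff_continuous_domRestrict]
    convert G₀.continuous using 1
    funext a
    exact dif_pos a.2
  have hG₁W : ∀ x ∈ A, proj (G₁ x) = W x := fun x hx => by
    simpa only [G₁, dif_pos hx] using hG₀ ⟨x, hx⟩
  obtain ⟨G, hG, hGW, hGG₁⟩ := exists_lift_union_biUnion_of_trivializations hF W
    (fun i => isClosed_closure) (fun i : t => ⟨e i, hVU i⟩) hA hG₁ hG₁W Finset.univ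
  have hcover : A ∪ ⋃ i ∈ Finset.univ, closure (V i) = univ :=
    eq_univ_of_univ_subset fun x _ => Or.inr (by
      obtain ⟨i, hi⟩ := mem_iUnion.1 (hV.symm ▸ mem_univ x : x ∈ ⋃ i, V i)
      exact mem_biUnion (Finset.mem_univ i) (subset_closure hi))
  rw [hcover] at hG hGW
  refine ⟨⟨G, continuousOn_univ.1 hG⟩, fun x => hGW x (mem_univ x), fun a => ?_⟩
  exact (hGG₁ a.2).trans (dif_pos a.2)

end Lifting

section SignFlip

variable {α β : Type*} [InvolutiveNeg β]

def signFlip (r : ℝ) (y : β) : β := if 0 < r then y else -y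

theorem signFlip_of_pos {r : ℝ} (hr : 0 < r) (y : β) : signFlip r y = y := if_pos hr

theorem signFlip_neg_neg {r : ℝ} (hr : r ≠ 0) (y : β) : signFlip (-r) (-y) = signFlip r y := by
  rcases hr.lt_or_gt with h | h
  · simp [signFlip, neg_pos.2 h, h.not_gt]
  · simp [signFlip, h, h.le]

theorem continuousOn_signFlip [TopologicalSpace α] [TopologicalSpace β] [ContinuousNeg β]
    {g : α → ℝ} {f : α → β} (hg : Continuous g) (hf : Continuous f) :
    ContinuousOn (fun a => signFlip (g a) (f a)) {a | g a ≠ 0} :=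
  ContinuousOn.if (fun _ ha => absurd (frontier_lt_subset_eq continuous_const hg ha.2).symm ha.1)
    hf.continuousOn hf.neg.continuousOn

end SignFlip

abbrev InfSphere : Type := sphere (0 : Hilbertl2) 1

namespace RPInf

def mk : InfSphere → RPInf := Quotient.mk antipodalSetoidInf

theorem isQuotientMap_mk : IsQuotientMap mk := isQuotientMap_quot_mk

theorem mk_neg (v : InfSphere) : mk (-v) = mk v := Quotient.sound (Or.inr rfl)

theorem mk_out (b : RPInf) : mk b.out = b := Quotient.out_eq b

theorem out_mk (v : InfSphere) : (mk v).out = v ∨ (mk v).out = -v :=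
  (Quotient.mk_out (s := antipodalSetoidInf) v).imp Subtype.ext Subtype.ext

def offHyperplane (u : InfSphere) : Set RPInf := {b | ⟪(b.out : Hilbertl2), u⟫ ≠ 0}

theorem preimage_mk_offHyperplane (u : InfSphere) :
    mk ⁻¹' offHyperplane u = {v : InfSphere | ⟪(v : Hilbertl2), u⟫ ≠ 0} := by
  refine Set.ext fun v => ?_
  show ⟪((mk v).out : Hilbertl2), u⟫ ≠ 0 ↔ _
  rcases out_mk v with h | h <;> simp [h, inner_neg_left]

theorem isOpen_offHyperplane (u : InfSphere) : IsOpen (offHyperplane u) := by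
  rw [← isQuotientMap_mk.isOpen_preimage, preimage_mk_offHyperplane]
  exact isOpen_ne_fun (continuous_subtype_val.inner continuous_const) continuous_const

/-- The representative of `b` on the positive side of the hyperplane `u^⊥`. -/
def posRep (u : InfSphere) (b : RPInf) : InfSphere := signFlip ⟪(b.out : Hilbertl2), u⟫ b.out

theorem posRep_mk {u v : InfSphere} (h : ⟪(v : Hilbertl2), u⟫ ≠ 0) :
    posRep u (mk v) = signFlip ⟪(v : Hilbertl2), u⟫ v := by
  rcases out_mk v with hv | hv <;> simp only [posRep, hv]
  rw [coe_neg_sphere, inner_neg_left, signFlip_neg_neg h]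

theorem mk_posRep (u : InfSphere) (b : RPInf) : mk (posRep u b) = b := by
  unfold posRep signFlip
  split_ifs
  · exact mk_out b
  · rw [mk_neg, mk_out]

theorem inner_posRep_pos {u : InfSphere} {b : RPInf} (hb : b ∈ offHyperplane u) :
    0 < ⟪(posRep u b : Hilbertl2), u⟫ := by
  unfold posRep signFlip
  split_ifs with h
  · exact h
  · rw [coe_neg_sphere, inner_neg_left, neg_pos]
    exact (not_lt.1 h).lt_of_ne hb

theorem continuousOn_posRep (u : InfSphere) : ContinuousOn (posRep u) (offHyperplane u) := by
  rw [isQuotientMap_mk.continuousOn_isOpen_iff (isOpen_offHyperplane u),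
    preimage_mk_offHyperplane]
  exact (continuousOn_signFlip (continuous_subtype_val.inner continuous_const) continuous_id).congr
    fun _ hv => posRep_mk hv

end RPInf

def sphereBundleSetoid (n : ℕ) : Setoid (InfSphere × USphere n) where
  r p q := p = q ∨ p = -q
  iseqv :=
    { refl := fun _ => Or.inl rfl
      symm := fun h => h.imp Eq.symm fun h => by rw [h, neg_neg]
      trans := by
        rintro p q r (rfl | rfl) (rfl | rfl)
        exacts [Or.inl rfl, Or.inr rfl, Or.inr rfl, Or.inl (neg_neg r)] }

/-- The sphere bundle `S^∞ ×_{±1} Sⁿ` over `ℝP^∞` associated with the double cover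
`S^∞ → ℝP^∞` and the antipodal action on `Sⁿ`. -/
def SphereBundle (n : ℕ) : Type := Quotient (sphereBundleSetoid n)

instance (n : ℕ) : TopologicalSpace (SphereBundle n) :=
  inferInstanceAs (TopologicalSpace (Quotient _))

namespace SphereBundle

variable {n : ℕ}

def mk : InfSphere × USphere n → SphereBundle n := Quotient.mk _

theorem isQuotientMap_mk : IsQuotientMap (mk (n := n)) := isQuotientMap_quot_mk

theorem continuous_mk : Continuous (mk (n := n)) := isQuotientMap_mk.continuous

theorem mk_neg (p : InfSphere × USphere n) : mk (-p) = mk p := Quotient.sound (Or.inr rfl)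

theorem out_mk (p : InfSphere × USphere n) : (mk p).out = p ∨ (mk p).out = -p :=
  Quotient.mk_out (s := sphereBundleSetoid n) p

theorem mk_signFlip (r : ℝ) (p : InfSphere × USphere n) :
    mk (signFlip r p.1, signFlip r p.2) = mk p := by
  unfold signFlip
  split_ifs
  · rfl
  · exact mk_neg p

def proj : SphereBundle n → RPInf :=
  Quotient.lift (fun p => RPInf.mk p.1) (by
    rintro p q (rfl | rfl)
    exacts [rfl, RPInf.mk_neg q.1])

theorem proj_mk (p : InfSphere × USphere n) : proj (mk p) = RPInf.mk p.1 := rfl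

theorem continuous_proj : Continuous (proj (n := n)) :=
  continuous_quot_lift _ (RPInf.isQuotientMap_mk.continuous.comp continuous_fst)

def toRP : SphereBundle n → RP n :=
  Quotient.lift (fun p => pcov n p.2) (by
    rintro p q (rfl | rfl)
    exacts [rfl, Quotient.sound (Or.inr rfl)])

theorem continuous_toRP : Continuous (toRP (n := n)) :=
  continuous_quot_lift _ (continuous_quot_mk.comp continuous_snd)

def fiberCoord (u : InfSphere) (p : SphereBundle n) : USphere n :=
  signFlip ⟪(p.out.1 : Hilbertl2), u⟫ p.out.2

theorem fiberCoord_mk {u : InfSphere} {p : InfSphere × USphere n}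
    (h : ⟪(p.1 : Hilbertl2), u⟫ ≠ 0) :
    fiberCoord u (mk p) = signFlip ⟪(p.1 : Hilbertl2), u⟫ p.2 := by
  rcases out_mk p with hp | hp <;> simp only [fiberCoord, hp]
  rw [Prod.fst_neg, Prod.snd_neg, coe_neg_sphere, inner_neg_left, signFlip_neg_neg h]

theorem preimage_mk_proj_offHyperplane (u : InfSphere) :
    mk ⁻¹' (proj ⁻¹' RPInf.offHyperplane u) =
      {p : InfSphere × USphere n | ⟪(p.1 : Hilbertl2), u⟫ ≠ 0} :=
  Set.ext fun p => Set.ext_iff.1 (RPInf.preimage_mk_offHyperplane u) p.1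

theorem continuousOn_fiberCoord (u : InfSphere) :
    ContinuousOn (fiberCoord (n := n) u) (proj ⁻¹' RPInf.offHyperplane u) := by
  rw [isQuotientMap_mk.continuousOn_isOpen_iff
    ((RPInf.isOpen_offHyperplane u).preimage continuous_proj), preimage_mk_proj_offHyperplane]
  exact (continuousOn_signFlip ((continuous_subtype_val.comp continuous_fst).inner
    continuous_const) continuous_snd).congr fun _ hp => fiberCoord_mk hp

def trivialization (n : ℕ) (u : InfSphere) : Trivialization (USphere n) (proj (n := n)) where
  toFun p := (proj p, fiberCoord u p)
  invFun q := mk (RPInf.posRep u q.1, q.2)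
  source := proj ⁻¹' RPInf.offHyperplane u
  target := RPInf.offHyperplane u ×ˢ univ
  map_source' _ hp := ⟨hp, mem_univ _⟩
  map_target' q hq := by
    simpa only [mem_preimage, proj_mk, RPInf.mk_posRep] using hq.1
  left_inv' := by
    rintro ⟨p⟩ hp
    have hp' : ⟪(p.1 : Hilbertl2), u⟫ ≠ 0 := (preimage_mk_proj_offHyperplane u).subset hp
    show mk (RPInf.posRep u (RPInf.mk p.1), fiberCoord u (mk p)) = mk p
    rw [RPInf.posRep_mk hp', fiberCoord_mk hp', mk_signFlip]
  right_inv' := by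
    rintro ⟨b, y⟩ ⟨hb, -⟩
    have hpos := RPInf.inner_posRep_pos hb
    rw [Prod.mk.injEq, proj_mk, RPInf.mk_posRep, fiberCoord_mk hpos.ne', signFlip_of_pos hpos]
    exact ⟨rfl, rfl⟩
  open_source := (RPInf.isOpen_offHyperplane u).preimage continuous_proj
  open_target := (RPInf.isOpen_offHyperplane u).prod isOpen_univ
  continuousOn_toFun := continuous_proj.continuousOn.prodMk (continuousOn_fiberCoord u)
  continuousOn_invFun := continuous_mk.comp_continuousOn
    (((RPInf.continuousOn_posRep u).comp continuousOn_fst fun _ hq => hq.1).prodMk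
      continuousOn_snd)
  baseSet := RPInf.offHyperplane u
  open_baseSet := RPInf.isOpen_offHyperplane u
  source_eq := rfl
  target_eq := rfl
  proj_toFun _ _ := rfl

theorem mem_trivialization_baseSet_out (b : RPInf) : b ∈ (trivialization n b.out).baseSet := by
  show ⟪(b.out : Hilbertl2), b.out⟫ ≠ 0
  rw [real_inner_self_eq_norm_sq, norm_eq_of_mem_sphere]
  norm_num

end SphereBundle

def euclideanToL2 (m : ℕ) : EuclideanSpace ℝ (Fin m) →ₗᵢ[ℝ] Hilbertl2 :=
  let b := (EuclideanSpace.basisFun (Fin m) ℝ).toBasis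
  let w : Fin m → Hilbertl2 := fun i => (default : HilbertBasis ℕ ℝ Hilbertl2) i
  have hb : Orthonormal ℝ b := by
    rw [OrthonormalBasis.coe_toBasis]; exact (EuclideanSpace.basisFun (Fin m) ℝ).orthonormal
  have hw : Orthonormal ℝ w :=
    (default : HilbertBasis ℕ ℝ Hilbertl2).orthonormal.comp _ Fin.val_injective
  (b.constr ℝ w).isometryOfOrthonormal hb (by
    rw [show b.constr ℝ w ∘ b = w from funext (b.constr_basis ℝ w)]
    exact hw)

def sphereToInf (n : ℕ) (y : USphere n) : InfSphere :=
  ⟨euclideanToL2 (n + 1) y,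
    mem_sphere_zero_iff_norm.2 (((euclideanToL2 _).norm_map _).trans (norm_eq_of_mem_sphere y))⟩

theorem continuous_sphereToInf (n : ℕ) : Continuous (sphereToInf n) :=
  ((euclideanToL2 _).continuous.comp continuous_subtype_val).subtype_mk _

theorem sphereToInf_neg (n : ℕ) (y : USphere n) : sphereToInf n (-y) = -sphereToInf n y :=
  Subtype.ext ((euclideanToL2 _).map_neg _)

namespace SphereBundle

variable {n : ℕ}

def ofRP : RP n → SphereBundle n :=
  Quotient.lift (fun y => mk (sphereToInf n y, y)) (by
    rintro y z (h | h)
    · rw [Subtype.ext h]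
    · rw [show y = -z from Subtype.ext h, sphereToInf_neg, ← Prod.neg_mk, mk_neg])

theorem continuous_ofRP : Continuous (ofRP (n := n)) :=
  continuous_quot_lift _ (continuous_mk.comp ((continuous_sphereToInf n).prodMk continuous_id))

theorem toRP_ofRP (y : RP n) : toRP (ofRP y) = y := by
  induction y using Quotient.ind
  rfl

end SphereBundle

open SphereBundle in
theorem isAbsoluteExtensor_rp_of_rpInf (n : ℕ) (X : Type*) [TopologicalSpace X] [CompactSpace X]
    [TopologicalSpace.MetrizableSpace X] (hSn : IsAbsoluteExtensor X (USphere n))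
    (hRPInf : IsAbsoluteExtensor X RPInf) : IsAbsoluteExtensor X (RP n) := by
  intro A hA f
  obtain ⟨W, hW⟩ :=
    hRPInf A hA ⟨proj ∘ ofRP ∘ f, continuous_proj.comp (continuous_ofRP.comp f.2)⟩
  obtain ⟨G, -, hG⟩ := exists_lift_extend_of_trivializations hSn
    (fun b => ⟨_, mem_trivialization_baseSet_out b⟩) W hA
    ⟨ofRP ∘ f, continuous_ofRP.comp f.2⟩ fun a => (hW a).symm
  refine ⟨⟨toRP ∘ G, continuous_toRP.comp G.2⟩, fun a => ?_⟩
  simp [hG a, toRP_ofRP]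

/-- If `X` is a compactum with `dim X ≤ 3` and `ℝP^∞ ∈ AE(X)`, then `ℝP³ ∈ AE(X)`. -/
theorem rp3_absolute_extensor_of_rpinf_absolute_extensor
    (X : Type) [TopologicalSpace X] [CompactSpace X] [TopologicalSpace.MetrizableSpace X]
    (hdim : IsAbsoluteExtensor X (USphere 3))
    (hZ2 : IsAbsoluteExtensor X RPInf) :
    IsAbsoluteExtensor X (RP 3) :=
  isAbsoluteExtensor_rp_of_rpInf 3 X hdim hZ2
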